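/- Let R be a commutative noetherian local ring and M a finitely generated R-module of finite G-dimension. If G is a bounded proper G-resolution of M, then χ^G(M) = Σ_{n ≥ 0} (-1)^n β_0^R(G_n), where β_0^R denotes minimal number of generators. In particular, when G is strict, χ^G(M) = β_0^R(G_0) + Σ_{n ≥ 1} (-1)^n rank_R(G_n). -/

import Mathlib

open CategoryTheory Opposite IsLocalRing

noncomputable section

universe u

variable (R : Type u) [CommRing R]

/-- The minimal number of generators of a module. -/
def nGens (M : Type u) [AddCommGroup M] [Module R M] : ℕ :=
  sInf {n | ∃ s : Finset M, s.card = n ∧ Submodule.span R (s : Set M) = ⊤}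

/-- The length of a module, i.e. the length of a longest chain of submodules,
as a natural number (junk value `0` if infinite). -/
def lengthNat (M : Type u) [AddCommGroup M] [Module R M] : ℕ :=
  (WithBot.unbotD 0 (Order.krullDim (Submodule R M))).toNat

/-- `M` has rank `r`: the localization of `M` at the set of nonzerodivisors of `R`
is free of rank `r`. -/
def HasRank (M : Type u) [AddCommGroup M] [Module R M] (r : ℕ) : Prop :=
  Nonempty (LocalizedModule (nonZeroDivisors R) M ≃ₗ[Localization (nonZeroDivisors R)]
    (Fin r → Localization (nonZeroDivisors R)))

/-- A finitely generated module `G` is totally reflexive if the biduality map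
`G → G^{**}` is bijective and `Ext^i(G, R) = 0 = Ext^i(G^*, R)` for all `i ≥ 1`. -/
def IsTotallyReflexive (M : Type u) [AddCommGroup M] [Module R M] : Prop :=
  Module.Finite R M ∧ Function.Bijective (Module.Dual.eval R M) ∧
  (∀ i : ℕ, 0 < i →
    Subsingleton (((Ext R (ModuleCat.{u} R) i).obj (op (ModuleCat.of R M))).obj
      (ModuleCat.of R R))) ∧
  (∀ i : ℕ, 0 < i →
    Subsingleton (((Ext R (ModuleCat.{u} R) i).obj (op (ModuleCat.of R (Module.Dual R M)))).obj
      (ModuleCat.of R R)))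

/-- A resolution of a module `M`: a nonnegatively graded chain complex together with
an augmentation map to `M` making the augmented complex exact. -/
structure Resolution (M : Type u) [AddCommGroup M] [Module R M] where
  C : ChainComplex (ModuleCat.{u} R) ℕ
  aug : C.X 0 →ₗ[R] M
  aug_surj : Function.Surjective aug
  exact_zero : Function.Exact (C.d 1 0) aug
  exact_succ : ∀ n : ℕ, Function.Exact (C.d (n + 2) (n + 1)) (C.d (n + 1) n)

namespace Resolution

variable {R}
variable {M : Type u} [AddCommGroup M] [Module R M]

/-- A resolution is bounded if its modules vanish in all high degrees. -/
def IsBounded (P : Resolution R M) : Prop := ∃ N : ℕ, ∀ n, N < n → Subsingleton (P.C.X n)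

/-- A resolution has length at most `i` if its modules vanish in degrees above `i`. -/
def LengthLE (P : Resolution R M) (i : ℕ) : Prop := ∀ n, i < n → Subsingleton (P.C.X n)

/-- A G-resolution: all modules in the resolution are totally reflexive. -/
def IsG (P : Resolution R M) : Prop := ∀ n, IsTotallyReflexive R (P.C.X n)

/-- A resolution by finitely generated free modules. -/
def IsFiniteFree (P : Resolution R M) : Prop :=
  ∀ n, Module.Free R (P.C.X n) ∧ Module.Finite R (P.C.X n)

/-- A strict G-resolution: degree `0` is totally reflexive and all positive degrees are
finitely generated free. -/
def IsStrict (P : Resolution R M) : Prop :=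
  IsTotallyReflexive R (P.C.X 0) ∧
    ∀ n : ℕ, Module.Free R (P.C.X (n + 1)) ∧ Module.Finite R (P.C.X (n + 1))

/-- Minimality of a resolution over a local ring: each differential maps into
`m` times the next module. -/
def IsMinimal [IsLocalRing R] (P : Resolution R M) : Prop :=
  ∀ n : ℕ, LinearMap.range (P.C.d (n + 1) n).hom ≤
    (maximalIdeal R) • (⊤ : Submodule R (P.C.X n))

/-- A resolution is proper if `Hom(H, -)` applied to the augmented resolution is exact for
every totally reflexive module `H`. -/
def IsProper (P : Resolution R M) : Prop :=
  ∀ (H : Type u) [AddCommGroup H] [Module R H], IsTotallyReflexive R H →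
    (Function.Surjective (fun g : H →ₗ[R] P.C.X 0 => P.aug ∘ₗ g)) ∧
    Function.Exact (fun g : H →ₗ[R] P.C.X 1 => ((P.C.d 1 0).hom : P.C.X 1 →ₗ[R] P.C.X 0) ∘ₗ g)
      (fun g : H →ₗ[R] P.C.X 0 => P.aug ∘ₗ g) ∧
    ∀ n : ℕ, Function.Exact
      (fun g : H →ₗ[R] P.C.X (n + 2) =>
        ((P.C.d (n + 2) (n + 1)).hom : P.C.X (n + 2) →ₗ[R] P.C.X (n + 1)) ∘ₗ g)
      (fun g : H →ₗ[R] P.C.X (n + 1) =>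
        ((P.C.d (n + 1) n).hom : P.C.X (n + 1) →ₗ[R] P.C.X n) ∘ₗ g)

end Resolution

/-- `M` has finite projective dimension: it admits a bounded resolution by finitely
generated free modules. -/
def HasFinitePD (M : Type u) [AddCommGroup M] [Module R M] : Prop :=
  ∃ P : Resolution R M, P.IsFiniteFree ∧ P.IsBounded

/-- `M` has finite G-dimension: it admits a bounded G-resolution. -/
def HasFiniteGDim (M : Type u) [AddCommGroup M] [Module R M] : Prop :=
  ∃ P : Resolution R M, P.IsG ∧ P.IsBounded

/-- `G-dim M ≤ i`. -/
def GDimLE (M : Type u) [AddCommGroup M] [Module R M] (i : ℕ) : Prop :=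
  ∃ P : Resolution R M, P.IsG ∧ P.LengthLE i

section Betti

variable [IsLocalRing R]

/-- Precomposition with `f`, on homomorphisms into the residue field. -/
def homRes {A B : ModuleCat.{u} R} (f : A ⟶ B) :
    (B →ₗ[R] ResidueField R) →ₗ[ResidueField R] (A →ₗ[R] ResidueField R) where
  toFun g := g ∘ₗ (f.hom : A →ₗ[R] B)
  map_add' g₁ g₂ := by ext; rfl
  map_smul' c g := by ext; rfl

/-- The `n`-th Betti number of a complex `C`, defined as the dimension over the residue
field of the `n`-th cohomology of `Hom(C, k)`.  Applied to a proper G-resolution of `M`,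
this is the `n`-th relative Betti number `β^G_n(M)` of Avramov–Martsinkovsky; applied to a
free resolution of `M` it is the classical Betti number `β_n(M)`. -/
def gBetti (C : ChainComplex (ModuleCat.{u} R) ℕ) : ℕ → ℕ
  | 0 => Module.finrank (ResidueField R) (LinearMap.ker (homRes R (C.d 1 0)))
  | (n + 1) => Module.finrank (ResidueField R)
      (@HasQuotient.Quotient (LinearMap.ker (homRes R (C.d (n + 2) (n + 1)))) _ Submodule.hasQuotient
        ((LinearMap.range (homRes R (C.d (n + 1) n))).comap
          (LinearMap.ker (homRes R (C.d (n + 2) (n + 1)))).subtype))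

/-- The Euler characteristic of (the Betti numbers of) a complex:
`χ = Σ_n (-1)^n β_n`. -/
def gChi (C : ChainComplex (ModuleCat.{u} R) ℕ) : ℤ :=
  ∑ᶠ n : ℕ, (-1 : ℤ) ^ n * (gBetti R C n : ℤ)

/-- The `i`-th partial Euler characteristic of a complex: `χ_i = Σ_{n ≥ i} (-1)^{n-i} β_n`. -/
def gChiAt (C : ChainComplex (ModuleCat.{u} R) ℕ) (i : ℕ) : ℤ :=
  ∑ᶠ n : ℕ, if i ≤ n then (-1 : ℤ) ^ (n - i) * (gBetti R C n : ℤ) else 0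

end Betti

end

/-! Applying `Hom_R(-, k)` to `G` gives a bounded complex of finite-dimensional `k`-vector spaces
whose cohomology has dimensions `β^G_n(M)`, so by rank–nullity its Euler characteristic is
`Σ (-1)^n dim_k Hom_R(G_n, k)`. By Nakayama, `Hom_R(G_n, k) ≅ Hom_k(k ⊗_R G_n, k)` has dimension
`β₀(G_n)`, which is `rank G_n` when `G_n` is free. -/

theorem finsum_nat_eq_add_finsum_succ {M : Type*} [AddCommMonoid M] {f : ℕ → M} {N : ℕ}
    (hf : ∀ n, N < n → f n = 0) : ∑ᶠ n, f n = f 0 + ∑ᶠ n, f (n + 1) := by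
  have hsupport : Function.support f ⊆ Finset.range (N + 1) := fun n hn => by
    by_contra h
    exact hn (hf n (by simpa using h))
  rw [finsum_eq_sum_of_support_subset _ hsupport,
    finsum_eq_sum_of_support_subset _ (s := Finset.range N) fun n hn => by
      simpa using hsupport hn, Finset.sum_range_succ', add_comm]

section Nakayama

open Module IsLocalRing TensorProduct

variable {R : Type u} [CommRing R] (G : Type u) [AddCommGroup G] [Module R G]

theorem nGens_eq_spanFinrank_top : nGens R G = (⊤ : Submodule R G).spanFinrank := by
  rw [Submodule.spanFinrank_eq_iInf, nGens, iInf, Set.range]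
  congr 1
  ext n
  exact ⟨fun ⟨s, hcard, hs⟩ => ⟨⟨s, hs⟩, hcard⟩, fun ⟨s, hs⟩ => ⟨s.1, hs, s.2⟩⟩

theorem nGens_eq_zero [Subsingleton G] : nGens R G = 0 :=
  Nat.sInf_eq_zero.mpr (.inl ⟨∅, rfl, Subsingleton.elim _ _⟩)

theorem nGens_eq_finrank [Nontrivial R] [Module.Free R G] : nGens R G = finrank R G := by
  rw [nGens_eq_spanFinrank_top, finrank_eq_spanFinrank_of_free]

variable [IsLocalRing R] [Module.Finite R G]

theorem nGens_eq_finrank_residueField_tensor :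
    nGens R G = finrank (ResidueField R) (ResidueField R ⊗[R] G) := by
  rw [nGens_eq_spanFinrank_top, ← spanFinrank_top_eq_of_residueField _ Module.Finite.fg_top,
    ← finrank_eq_spanFinrank_of_free]
  exact (Submodule.topEquiv.baseChange R (ResidueField R) _ _).finrank_eq

instance : FiniteDimensional (ResidueField R) (G →ₗ[R] ResidueField R) :=
  .equiv (LinearMap.liftBaseChangeEquiv (ResidueField R)).symm

theorem finrank_linearMap_residueField :
    finrank (ResidueField R) (G →ₗ[R] ResidueField R) = nGens R G := by
  rw [(LinearMap.liftBaseChangeEquiv (ResidueField R)).finrank_eq, Subspace.dual_finrank_eq,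
    nGens_eq_finrank_residueField_tensor]

end Nakayama

section EulerCharacteristic

open Finset

variable {b r d : ℕ → ℕ}

/- `b n`, `r n` and `d n` stand for the dimensions of the `n`-th cohomology, of the image of the
`n`-th differential and of the `n`-th term of a cochain complex of vector spaces. -/
theorem sum_range_alternating_add_eq (h0 : b 0 + r 0 = d 0)
    (hsucc : ∀ n, b (n + 1) + r (n + 1) + r n = d (n + 1)) (m : ℕ) :
    ∑ n ∈ range (m + 1), (-1 : ℤ) ^ n * b n + (-1) ^ m * r m =
      ∑ n ∈ range (m + 1), (-1 : ℤ) ^ n * d n := by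
  induction m with
  | zero => simp [← h0]
  | succ m ih =>
    rw [sum_range_succ, sum_range_succ _ (m + 1), ← ih, ← hsucc m]
    push_cast
    ring

theorem finsum_alternating_eq (h0 : b 0 + r 0 = d 0)
    (hsucc : ∀ n, b (n + 1) + r (n + 1) + r n = d (n + 1)) {N : ℕ} (hd : ∀ n, N < n → d n = 0) :
    ∑ᶠ n, (-1 : ℤ) ^ n * b n = ∑ᶠ n, (-1 : ℤ) ^ n * d n := by
  have hvanish : ∀ n, N < n + 1 → b (n + 1) = 0 ∧ r (n + 1) = 0 ∧ r n = 0 := fun n hn => by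
    have := hsucc n; have := hd (n + 1) hn; omega
  have hsupport {f : ℕ → ℕ} (hf : ∀ n, N < n → f n = 0) :
      Function.support (fun n => (-1 : ℤ) ^ n * f n) ⊆ range (N + 1) := fun n hn => by
    by_contra h
    simp_all [hf n (by simpa using h)]
  rw [finsum_eq_sum_of_support_subset _ (hsupport hd),
    finsum_eq_sum_of_support_subset _ (hsupport ?_), ← sum_range_alternating_add_eq h0 hsucc,
    (hvanish N (by omega)).2.2]
  · simp
  · rintro (_ | n) hn
    · omega
    · exact (hvanish n hn).1

end EulerCharacteristic

section Betti

open Module IsLocalRing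

variable {R : Type u} [CommRing R] [IsLocalRing R] (C : ChainComplex (ModuleCat.{u} R) ℕ)

theorem range_homRes_le_ker (n : ℕ) :
    LinearMap.range (homRes R (C.d (n + 1) n)) ≤
      LinearMap.ker (homRes R (C.d (n + 2) (n + 1))) := by
  rintro _ ⟨g, rfl⟩
  ext x
  simp [homRes, ← ModuleCat.comp_apply]

variable [∀ n, Module.Finite R (C.X n)]

theorem gBetti_zero_add_finrank_range :
    gBetti R C 0 + finrank (ResidueField R) (LinearMap.range (homRes R (C.d 1 0))) =
      nGens R (C.X 0) := by
  rw [← finrank_linearMap_residueField (C.X 0),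
    ← (homRes R (C.d 1 0)).finrank_range_add_finrank_ker, add_comm]
  rfl

theorem gBetti_succ_add_finrank_range (n : ℕ) :
    gBetti R C (n + 1) + finrank (ResidueField R) (LinearMap.range (homRes R (C.d (n + 1) n))) =
      finrank (ResidueField R) (LinearMap.ker (homRes R (C.d (n + 2) (n + 1)))) := by
  rw [← (Submodule.comapSubtypeEquivOfLe (range_homRes_le_ker C n)).finrank_eq]
  exact Submodule.finrank_quotient_add_finrank _

theorem gChi_eq_finsum_nGens {N : ℕ} (hC : ∀ n, N < n → Subsingleton (C.X n)) :
    gChi R C = ∑ᶠ n, (-1 : ℤ) ^ n * (nGens R (C.X n) : ℤ) := by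
  refine finsum_alternating_eq
    (r := fun n => finrank (ResidueField R) (LinearMap.range (homRes R (C.d (n + 1) n))))
    (gBetti_zero_add_finrank_range C) (fun n => ?_) (N := N) fun n hn => ?_
  · rw [add_right_comm, gBetti_succ_add_finrank_range, add_comm,
      ← finrank_linearMap_residueField (C.X (n + 1)),
      ← (homRes R (C.d (n + 2) (n + 1))).finrank_range_add_finrank_ker]
  · have := hC n hn
    exact nGens_eq_zero _

end Betti

theorem gChi_eq_alternating_sum_nGens_general
    (R : Type u) [CommRing R] [IsLocalRing R]
    (M : Type u) [AddCommGroup M] [Module R M]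
    (P : Resolution R M) (hPg : P.IsG) (hPb : P.IsBounded) :
    gChi R P.C = ∑ᶠ n : ℕ, (-1 : ℤ) ^ n * (nGens R (P.C.X n) : ℤ) ∧
    (P.IsStrict → gChi R P.C = (nGens R (P.C.X 0) : ℤ) +
      ∑ᶠ n : ℕ, (-1 : ℤ) ^ (n + 1) * (Module.finrank R (P.C.X (n + 1)) : ℤ)) := by
  obtain ⟨N, hN⟩ := hPb
  have := fun n => (hPg n).1
  have hχ := gChi_eq_finsum_nGens P.C hN
  refine ⟨hχ, fun hstrict => ?_⟩
  have hfree (n : ℕ) : nGens R (P.C.X (n + 1)) = Module.finrank R (P.C.X (n + 1)) :=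
    have := (hstrict.2 n).1
    nGens_eq_finrank _
  rw [hχ, finsum_nat_eq_add_finsum_succ (N := N) fun n hn => ?_]
  · simp only [hfree, pow_zero, one_mul]
  · have := hN n hn
    rw [nGens_eq_zero, Nat.cast_zero, mul_zero]

/-- If `G` is a bounded proper G-resolution of a module `M` of finite G-dimension over a
commutative noetherian local ring, then `χ^G(M) = Σ_{n≥0} (-1)^n β₀(G_n)`; in particular,
when `G` is strict, `χ^G(M) = β₀(G_0) + Σ_{n≥1} (-1)^n rank(G_n)`. -/
theorem gChi_eq_alternating_sum_nGens
    (R : Type u) [CommRing R] [IsNoetherianRing R] [IsLocalRing R]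
    (M : Type u) [AddCommGroup M] [Module R M] [Module.Finite R M]
    (hgdim : HasFiniteGDim R M)
    (P : Resolution R M) (hPg : P.IsG) (hPb : P.IsBounded) (hPp : P.IsProper) :
    gChi R P.C = ∑ᶠ n : ℕ, (-1 : ℤ) ^ n * (nGens R (P.C.X n) : ℤ) ∧
    (P.IsStrict → gChi R P.C = (nGens R (P.C.X 0) : ℤ) +
      ∑ᶠ n : ℕ, (-1 : ℤ) ^ (n + 1) * (Module.finrank R (P.C.X (n + 1)) : ℤ)) :=
  gChi_eq_alternating_sum_nGens_general R M P hPg hPb
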